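/- Measurement update rule for the KD distribution: if ρ' ∝ (I + (-1)^b Z_j) ρ (I + (-1)^b Z_j) is the post-measurement state after measuring qubit j with outcome b, then Q_{g,χ}(ρ') = (1/2)[Q_{g,χ}(ρ) + Q_{g,χ+e_j}(ρ)] whenever g_j = b (conditioned on the outcome, with appropriate normalization), where e_j is the j-th standard basis vector. -/

import Mathlib

open scoped BigOperators
open Matrix Kronecker
open scoped ComplexOrder

noncomputable section

/-- The group `G = (ℤ/2ℤ)^n` indexing the computational basis of `(ℂ²)^{⊗n}`. -/
abbrev G (n : ℕ) : Type := Fin n → ZMod 2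

/-- Mod-2 dot product. -/
def dot {n : ℕ} (u v : G n) : ZMod 2 := ∑ j, u j * v j

/-- `(-1)^x` for `x : ZMod 2`. -/
def sgn (x : ZMod 2) : ℂ := if x = 0 then 1 else -1

/-- Normalization constant `2^{-n/2}`. -/
def nrm (n : ℕ) : ℂ := ((Real.sqrt 2 ^ n : ℝ) : ℂ)⁻¹

/-- Amplitude `⟨a|χ⟩ = (-1)^{χ·a} 2^{-n/2}` of the Fourier basis state `|χ⟩`. -/
def chi {n : ℕ} (χ a : G n) : ℂ := sgn (dot χ a) * nrm n

/-- KD phase-space point operator `B_{g,χ} = |χ⟩⟨χ|g⟩⟨g|`. -/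
def B {n : ℕ} (g χ : G n) : Matrix (G n) (G n) ℂ :=
  Matrix.of fun a b => chi χ a * (starRingEnd ℂ) (chi χ g) * (if b = g then 1 else 0)

/-- Real Pauli string `P_{u,v} = ∏_j Z_j^{v_j} X_j^{u_j}`:
it maps `|b⟩` to `(-1)^{v·(b+u)} |b+u⟩`. -/
def P {n : ℕ} (u v : G n) : Matrix (G n) (G n) ℂ :=
  Matrix.of fun a b => if a = b + u then sgn (dot v a) else 0

/-- The `(ℤ/2ℤ)^n` Kirkwood–Dirac distribution `Q_{g,χ}(ρ) = Tr(B_{g,χ} ρ)`. -/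
def Q {n : ℕ} (ρ : Matrix (G n) (G n) ℂ) (g χ : G n) : ℂ := (B g χ * ρ).trace


/-- Pauli Z on qubit j. -/
def Zop {n : ℕ} (j : Fin n) : Matrix (G n) (G n) ℂ :=
  Matrix.diagonal fun a => sgn (a j)

/-- The j-th standard basis vector of (Z/2Z)^n. -/
def e {n : ℕ} (j : Fin n) : G n := fun k => if k = j then 1 else 0

/-!
In the computational basis `1 + (-1)^b Z_j` is diagonal with entries `1 + (-1)^(b + a_j)`, i.e.
twice the projector onto `a_j = b`; with `g_j = b` the update therefore multiplies `ρ_{g a}` by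
`(1 + (-1)^(g_j + a_j)) / 2`. Since `⟨a|χ + e_j⟩ = (-1)^(a_j) ⟨a|χ⟩`, averaging `Q_{g,χ}` and
`Q_{g,χ+e_j}` inserts exactly the same factor into the sum `Q_{g,χ}(ρ) = Σ_a ⟨a|χ⟩⟨χ|g⟩ ρ_{g a}`.
-/

lemma sgn_add (x y : ZMod 2) : sgn (x + y) = sgn x * sgn y := by
  obtain rfl | rfl := (by decide : ∀ z : ZMod 2, z = 0 ∨ z = 1) x <;>
    obtain rfl | rfl := (by decide : ∀ z : ZMod 2, z = 0 ∨ z = 1) y <;>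
    simp [sgn, show (1 + 1 : ZMod 2) = 0 from rfl]

lemma sgn_mul_self (x : ZMod 2) : sgn x * sgn x = 1 := by
  rw [← sgn_add, CharTwo.add_self_eq_zero, sgn, if_pos rfl]

lemma conj_sgn (x : ZMod 2) : starRingEnd ℂ (sgn x) = sgn x := by
  unfold sgn; split_ifs <;> simp

lemma dot_add_e {n : ℕ} (j : Fin n) (χ a : G n) : dot (χ + e j) a = dot χ a + a j := by
  simp [dot, e, add_mul, Finset.sum_add_distrib, ite_mul]

lemma chi_add_e {n : ℕ} (j : Fin n) (χ a : G n) : chi (χ + e j) a = sgn (a j) * chi χ a := by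
  rw [chi, chi, dot_add_e, sgn_add]
  ring

lemma Q_eq_sum {n : ℕ} (ρ : Matrix (G n) (G n) ℂ) (g χ : G n) :
    Q ρ g χ = ∑ a, chi χ a * starRingEnd ℂ (chi χ g) * ρ g a := by
  simp [Q, B, Matrix.trace, Matrix.mul_apply]

lemma Q_add_Q_add_e {n : ℕ} (ρ : Matrix (G n) (G n) ℂ) (g χ : G n) (j : Fin n) :
    Q ρ g χ + Q ρ g (χ + e j) =
      ∑ a, chi χ a * starRingEnd ℂ (chi χ g) * ((1 + sgn (g j) * sgn (a j)) * ρ g a) := by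
  simp only [Q_eq_sum, chi_add_e, map_mul, conj_sgn, ← Finset.sum_add_distrib]
  exact Finset.sum_congr rfl fun a _ => by ring

lemma one_add_smul_Zop {n : ℕ} (s : ℂ) (j : Fin n) :
    1 + s • Zop j = diagonal fun a => 1 + s * sgn (a j) := by
  rw [Zop, ← diagonal_one, ← diagonal_smul, diagonal_add]
  rfl

lemma smul_diagonal_mul_mul_diagonal_apply {ι R : Type*} [Fintype ι] [DecidableEq ι]
    [Semiring R] (c : R) (d d' : ι → R) (M : Matrix ι ι R) (i k : ι) :
    (c • (diagonal d * M * diagonal d')) i k = c * d i * M i k * d' k := by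
  simp [diagonal_mul, mul_diagonal, mul_assoc]

theorem kd_measurement_update_general {n : ℕ} (j : Fin n) (b : ZMod 2)
    (ρ : Matrix (G n) (G n) ℂ)
    (g χ : G n) (hg : g j = b) :
    Q ((1 / 4 : ℂ) • ((1 + sgn b • Zop j) * ρ * (1 + sgn b • Zop j))) g χ =
      (1 / 2 : ℂ) * (Q ρ g χ + Q ρ g (χ + e j)) := by
  rw [one_add_smul_Zop, Q_eq_sum, Q_add_Q_add_e, Finset.mul_sum]
  refine Finset.sum_congr rfl fun a _ => ?_
  rw [smul_diagonal_mul_mul_diagonal_apply, hg, sgn_mul_self]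
  ring

/-- measurement update rule for the KD distribution. Measuring qubit j
with outcome b updates rho to the (Lueders) post-measurement state
`rho' = (1/4)(I + (-1)^b Z_j) rho (I + (-1)^b Z_j)`; whenever `g_j = b`,
`Q_{g,chi}(rho') = (1/2)[Q_{g,chi}(rho) + Q_{g,chi+e_j}(rho)]`. -/
theorem kd_measurement_update {n : ℕ} (j : Fin n) (b : ZMod 2)
    (ρ : Matrix (G n) (G n) ℂ) (hρ : ρ.PosSemidef) (hτ : ρ.trace = 1)
    (hp : ((1 + sgn b • Zop j) * ρ).trace ≠ 0)
    (g χ : G n) (hg : g j = b) :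
    Q ((1 / 4 : ℂ) • ((1 + sgn b • Zop j) * ρ * (1 + sgn b • Zop j))) g χ =
      (1 / 2 : ℂ) * (Q ρ g χ + Q ρ g (χ + e j)) :=
  kd_measurement_update_general j b ρ g χ hg
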